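/- arXiv:1712.03458 — 2 statements merged into one kernel-verified Lean document; each statement's English description precedes it below -/
import Mathlib

section
/- The formal power series \sum_{n \ge 0} a_n x^n (with a_0 = 1) is a unit in the ring of formal power series R[[x]], and its multiplicative inverse is the power series \sum_{n \ge 0} (-1)^n D_n x^n; equivalently, (\sum_{n \ge 0} a_n x^n) \cdot (\sum_{n \ge 0} (-1)^n D_n x^n) = 1 in R[[x]]. -/
/-- The `n × n` matrix whose `(i,j)` entry (0-based indices) is `a (j - i + 1)`,
with the convention that entries with `j - i + 1 < 0` (i.e. `i > j + 1`) are `0`.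
Its first row is `(a 1, a 2, ..., a n)`, the entries directly below the main
diagonal are `a 0 = 1`, and all entries further below are `0`. -/
def toeplitzDetMatrix {R : Type*} [CommRing R] (a : ℕ → R) (n : ℕ) :
    Matrix (Fin n) (Fin n) R :=
  fun i j => if (i : ℕ) ≤ (j : ℕ) + 1 then a ((j : ℕ) + 1 - (i : ℕ)) else 0

/-- `D n` is the determinant of the above `n × n` matrix; `D 0 = 1` (empty determinant). -/
def toeplitzDet {R : Type*} [CommRing R] (a : ℕ → R) (n : ℕ) : R :=
  (toeplitzDetMatrix a n).det

lemma toeplitz_sub {R : Type*} [CommRing R] (a : ℕ → R) (n : ℕ) :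
    (toeplitzDetMatrix a (n + 1)).submatrix Fin.succ Fin.succ = toeplitzDetMatrix a n := by
  ext i j
  simp only [Matrix.submatrix_apply, toeplitzDetMatrix, Fin.val_succ]
  by_cases h : (i : ℕ) ≤ (j : ℕ) + 1
  · rw [if_pos h, if_pos (by omega)]
    congr 1
    omega
  · rw [if_neg h, if_neg (by omega)]

lemma toeplitz_minor {R : Type*} [CommRing R] (a : ℕ → R) (ha : a 0 = 1) :
    ∀ n : ℕ, ∀ j : Fin (n + 1),
      ((toeplitzDetMatrix a (n + 1)).submatrix Fin.succ j.succAbove).det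
        = toeplitzDet a (n - (j : ℕ)) := by
  intro n
  induction n with
  | zero =>
      intro j
      have hj : (j : ℕ) = 0 := Nat.lt_one_iff.mp j.isLt
      rw [hj]
      simp [toeplitzDet, Matrix.det_fin_zero]
  | succ m ih =>
      intro j
      refine Fin.cases ?_ ?_ j
      · rw [Fin.succAbove_zero, toeplitz_sub]
        simp [toeplitzDet]
        rfl
      · intro j'
        rw [Matrix.det_succ_column_zero]
        have hcol : ∀ i : Fin (m + 1),
            ((toeplitzDetMatrix a (m + 1 + 1)).submatrix Fin.succ j'.succ.succAbove) i 0
              = if i = 0 then 1 else 0 := by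
          intro i
          simp only [Matrix.submatrix_apply, Fin.succ_succAbove_zero, toeplitzDetMatrix,
            Fin.val_succ, Fin.val_zero]
          by_cases hi : i = 0
          · subst hi; simp [ha]
          · have hv : (i : ℕ) ≠ 0 := by intro h; apply hi; ext; simp [h]
            rw [if_neg hi, if_neg (by omega)]
        rw [Finset.sum_eq_single 0 (fun i _ hi => by rw [hcol i, if_neg hi]; ring)
          (fun h => absurd (Finset.mem_univ 0) h)]
        rw [hcol 0]
        simp only [Fin.val_zero, pow_zero, if_pos rfl, one_mul, Fin.succAbove_zero]
        have hsub : (((toeplitzDetMatrix a (m + 1 + 1)).submatrix Fin.succ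
            j'.succ.succAbove).submatrix Fin.succ Fin.succ)
            = (toeplitzDetMatrix a (m + 1)).submatrix Fin.succ j'.succAbove := by
          ext i k
          simp only [Matrix.submatrix_apply, Fin.succ_succAbove_succ]
          have := congrFun (congrFun (toeplitz_sub a (m + 1)) i.succ) (j'.succAbove k)
          simpa [Matrix.submatrix_apply] using this
        rw [hsub, ih j']
        simp [Fin.val_succ]

lemma toeplitzDet_succ {R : Type*} [CommRing R] (a : ℕ → R) (ha : a 0 = 1) (n : ℕ) :
    toeplitzDet a (n + 1)
      = ∑ j ∈ Finset.range (n + 1), (-1 : R) ^ j * a (j + 1) * toeplitzDet a (n - j) := by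
  rw [toeplitzDet, Matrix.det_succ_row_zero]
  rw [← Fin.sum_univ_eq_sum_range (fun j => (-1 : R) ^ j * a (j + 1) * toeplitzDet a (n - j))]
  refine Finset.sum_congr rfl fun j _ => ?_
  rw [toeplitz_minor a ha n j]
  simp [toeplitzDetMatrix]

theorem powerSeries_inverse_eq_alternating_det {R : Type*} [CommRing R]
    (a : ℕ → R) (ha : a 0 = 1) :
    IsUnit (PowerSeries.mk a) ∧
      PowerSeries.mk a * PowerSeries.mk (fun n => (-1 : R) ^ n * toeplitzDet a n) = 1 := by
  have hmul : PowerSeries.mk a * PowerSeries.mk (fun n => (-1 : R) ^ n * toeplitzDet a n) = 1 := by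
    ext n
    rw [PowerSeries.coeff_mul]
    simp only [PowerSeries.coeff_mk]
    rw [Finset.Nat.sum_antidiagonal_eq_sum_range_succ_mk]
    cases n with
    | zero =>
        simp [ha, toeplitzDet, Matrix.det_fin_zero]
    | succ m =>
        rw [Finset.sum_range_succ']
        simp only [Nat.sub_zero, Nat.succ_sub_succ]
        have hD : toeplitzDet a (m + 1)
            = ∑ j ∈ Finset.range (m + 1), (-1 : R) ^ j * a (j + 1) * toeplitzDet a (m - j) :=
          toeplitzDet_succ a ha m
        have hcoeff : (PowerSeries.coeff (R := R) (m + 1)) 1 = 0 := by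
          simp [PowerSeries.coeff_one]
        rw [hcoeff, ha, one_mul, hD, Finset.mul_sum, ← Finset.sum_add_distrib]
        refine Finset.sum_eq_zero fun j hj => ?_
        have hjm : j ≤ m := Nat.lt_succ_iff.mp (Finset.mem_range.mp hj)
        have hsign : (-1 : R) ^ (m + 1) * (-1 : R) ^ j = -(-1 : R) ^ (m - j) := by
          have h1 : m + 1 + j = (m - j) + (2 * j + 1) := by omega
          rw [← pow_add, h1, pow_add]
          have : (-1 : R) ^ (2 * j + 1) = -1 := by
            rw [pow_succ, pow_mul]
            simp
          rw [this]
          ring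
        calc a (j + 1) * ((-1 : R) ^ (m - j) * toeplitzDet a (m - j))
              + (-1 : R) ^ (m + 1) * ((-1 : R) ^ j * a (j + 1) * toeplitzDet a (m - j))
            = a (j + 1) * ((-1 : R) ^ (m - j) * toeplitzDet a (m - j))
              + ((-1 : R) ^ (m + 1) * (-1 : R) ^ j) * (a (j + 1) * toeplitzDet a (m - j)) := by
              ring
          _ = 0 := by rw [hsign]; ring
  exact ⟨IsUnit.of_mul_eq_one _ hmul, hmul⟩
end

section
/- For every m \ge 1, the coefficient \sigma_m of the inverse power series is given by the multinomial formula: \sigma_m = \sum (-1)^{j_1 + j_2 + \cdots + j_m} \frac{(j_1 + j_2 + \cdots + j_m)!}{j_1! \, j_2! \cdots j_m!} \, c_1^{j_1} c_2^{j_2} \cdots c_m^{j_m}, where the sum runs over all m-tuples (j_1, \ldots, j_m) of nonnegative integers with j_1 + 2 j_2 + \cdots + m j_m = m. -/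
private lemma aux_prod {M : Type*} [CommMonoid M] (m : ℕ) (f : ℕ → M) :
    ∏ k ∈ Finset.Icc 1 m, f k = ∏ i : Fin m, f ((i : ℕ) + 1) := by
  induction m with
  | zero => simp
  | succ n ih =>
      rw [Finset.prod_Icc_succ_top (by omega), ih, Fin.prod_univ_castSucc]
      simp

private lemma aux_sum {M : Type*} [AddCommMonoid M] (m : ℕ) (f : ℕ → M) :
    ∑ k ∈ Finset.Icc 1 m, f k = ∑ i : Fin m, f ((i : ℕ) + 1) := by
  induction m with
  | zero => simp
  | succ n ih =>
      rw [Finset.sum_Icc_succ_top (by omega), ih, Fin.sum_univ_castSucc]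
      simp

theorem inverse_coeff_eq_multinomial_sum {R : Type*} [CommRing R]
    (c : ℕ → R) (hc : c 0 = 1) (σ : ℕ → R)
    (hσ : PowerSeries.mk c * PowerSeries.mk σ = 1)
    (m : ℕ) (hm : 1 ≤ m) :
    σ m = ∑ j ∈ (Fintype.piFinset fun _ : Fin m => Finset.range (m + 1)).filter
        (fun j : Fin m → ℕ => ∑ i : Fin m, ((i : ℕ) + 1) * j i = m),
      (-1 : R) ^ (∑ i : Fin m, j i) * (Nat.multinomial Finset.univ j : R) *
        ∏ i : Fin m, c ((i : ℕ) + 1) ^ j i := by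
  classical
  set T : PowerSeries R := PowerSeries.mk c - 1 with hTdef
  have hTc : ∀ k, (PowerSeries.coeff (R := R) k) T = if k = 0 then 0 else c k := by
    intro k
    simp only [hTdef, map_sub, PowerSeries.coeff_mk, PowerSeries.coeff_one]
    split <;> simp_all
  set S : PowerSeries R := ∑ k ∈ Finset.Icc 1 m, PowerSeries.C (R := R) (c k) * PowerSeries.X ^ k
    with hSdef
  have hScoeff : ∀ n, (PowerSeries.coeff (R := R) n) S = if n ∈ Finset.Icc 1 m then c n else 0 := by
    intro n
    simp only [hSdef, map_sum, PowerSeries.coeff_C_mul, PowerSeries.coeff_X_pow, mul_ite,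
      mul_one, mul_zero]
    rw [Finset.sum_ite_eq (Finset.Icc 1 m) n c]
  have hdvd : (PowerSeries.X : PowerSeries R) ^ (m + 1) ∣ T - S := by
    rw [PowerSeries.X_pow_dvd_iff]
    intro n hn
    rw [map_sub, hTc, hScoeff]
    rcases Nat.eq_zero_or_pos n with h | h
    · simp [h, Finset.mem_Icc]
    · have : n ∈ Finset.Icc 1 m := by simp [Finset.mem_Icc]; omega
      simp [this, Nat.pos_iff_ne_zero.mp h]
  have hcoeffTS : ∀ n : ℕ, (PowerSeries.coeff (R := R) m) (T ^ n) = (PowerSeries.coeff (R := R) m) (S ^ n) := by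
    intro n
    have h1 : (PowerSeries.X : PowerSeries R) ^ (m + 1) ∣ T ^ n - S ^ n :=
      hdvd.trans (sub_dvd_pow_sub_pow T S n)
    have h2 := PowerSeries.X_pow_dvd_iff.mp h1 m (Nat.lt_succ_self m)
    rw [map_sub, sub_eq_zero] at h2
    exact h2
  have hfT : PowerSeries.mk c = 1 + T := by rw [hTdef]; ring
  have h2 : (1 + T) * PowerSeries.mk σ = 1 := by rw [← hfT]; exact hσ
  have hgeom : PowerSeries.mk σ =
      (∑ n ∈ Finset.range (m + 1), (-T) ^ n) + (-T) ^ (m + 1) * PowerSeries.mk σ := by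
    have h1 := geom_sum_mul (-T) (m + 1)
    linear_combination (∑ n ∈ Finset.range (m + 1), (-T) ^ n) * h2 + (PowerSeries.mk σ) * h1
  have hXT : (PowerSeries.X : PowerSeries R) ^ (m + 1) ∣ (-T) ^ (m + 1) * PowerSeries.mk σ := by
    have hx : (PowerSeries.X : PowerSeries R) ∣ T := by
      rw [PowerSeries.X_dvd_iff]
      simpa using hTc 0
    have hx' : (PowerSeries.X : PowerSeries R) ∣ -T := (dvd_neg).mpr hx
    exact Dvd.dvd.mul_right (pow_dvd_pow_of_dvd hx' (m + 1)) _
  have hmain : σ m = ∑ n ∈ Finset.range (m + 1),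
      (-1 : R) ^ n * (PowerSeries.coeff (R := R) m) (S ^ n) := by
    have h0 : σ m = (PowerSeries.coeff (R := R) m) (PowerSeries.mk σ) := by simp
    rw [h0, hgeom, map_add, map_sum,
      PowerSeries.X_pow_dvd_iff.mp hXT m (Nat.lt_succ_self m), add_zero]
    refine Finset.sum_congr rfl fun n _ => ?_
    rw [neg_pow, ← hcoeffTS n]
    have hC : ((-1 : PowerSeries R) ^ n) = PowerSeries.C (R := R) ((-1 : R) ^ n) := by
      rw [map_pow, map_neg, map_one]
    rw [hC, PowerSeries.coeff_C_mul]
  have hSn : ∀ n : ℕ, (PowerSeries.coeff (R := R) m) (S ^ n) =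
      ∑ j ∈ (Finset.piAntidiag (Finset.Icc 1 m) n).filter
          (fun j => ∑ k ∈ Finset.Icc 1 m, k * j k = m),
        (Nat.multinomial (Finset.Icc 1 m) j : R) * ∏ k ∈ Finset.Icc 1 m, c k ^ j k := by
    intro n
    rw [hSdef, Finset.sum_pow_eq_sum_piAntidiag, map_sum, Finset.sum_filter]
    refine Finset.sum_congr rfl fun j hj => ?_
    have hprod : ∏ k ∈ Finset.Icc 1 m, (PowerSeries.C (R := R) (c k) * PowerSeries.X ^ k) ^ j k
        = PowerSeries.C (R := R) (∏ k ∈ Finset.Icc 1 m, c k ^ j k) *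
          PowerSeries.X ^ (∑ k ∈ Finset.Icc 1 m, k * j k) := by
      rw [map_prod, ← Finset.prod_pow_eq_pow_sum, ← Finset.prod_mul_distrib]
      exact Finset.prod_congr rfl fun k _ => by rw [mul_pow, ← pow_mul, map_pow]
    have hcast : ((Nat.multinomial (Finset.Icc 1 m) j : ℕ) : PowerSeries R)
        = PowerSeries.C (R := R) ((Nat.multinomial (Finset.Icc 1 m) j : ℕ) : R) := by
      rw [map_natCast]
    rw [hprod, hcast, ← mul_assoc, ← map_mul, PowerSeries.coeff_C_mul,
      PowerSeries.coeff_X_pow, mul_ite, mul_zero]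
    by_cases h : ∑ k ∈ Finset.Icc 1 m, k * j k = m
    · simp [h]
    · simp [h, Ne.symm h]
  have hsigma : σ m = ∑ p ∈ (Finset.range (m + 1)).sigma
      (fun n => (Finset.piAntidiag (Finset.Icc 1 m) n).filter
        (fun j => ∑ k ∈ Finset.Icc 1 m, k * j k = m)),
      (-1 : R) ^ p.1 * (Nat.multinomial (Finset.Icc 1 m) p.2 : R) *
        ∏ k ∈ Finset.Icc 1 m, c k ^ p.2 k := by
    rw [hmain, Finset.sum_sigma]
    refine Finset.sum_congr rfl fun n _ => ?_
    rw [hSn, Finset.mul_sum]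
    refine Finset.sum_congr rfl fun j _ => ?_
    dsimp only
    ring
  rw [hsigma]
  refine Finset.sum_nbij' (fun p => fun i : Fin m => p.2 ((i : ℕ) + 1))
    (fun j => ⟨∑ i : Fin m, j i,
      fun k => if h : k - 1 < m ∧ 1 ≤ k then j ⟨k - 1, h.1⟩ else 0⟩)
    ?_ ?_ ?_ ?_ ?_
  · rintro ⟨n, j⟩ hp
    simp only [Finset.mem_sigma, Finset.mem_filter, Finset.mem_piAntidiag,
      Finset.mem_range] at hp
    obtain ⟨hn, ⟨hsum, hsupp⟩, hwt⟩ := hp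
    rw [Finset.mem_filter]
    dsimp only
    constructor
    · rw [Fintype.mem_piFinset]
      intro i
      rw [Finset.mem_range]
      have h1 : ((i : ℕ) + 1) * j ((i : ℕ) + 1) ≤ ∑ k ∈ Finset.Icc 1 m, k * j k :=
        Finset.single_le_sum (f := fun k => k * j k)
          (fun k _ => Nat.zero_le _) (by rw [Finset.mem_Icc]; omega)
      have h2' : j ((i : ℕ) + 1) ≤ ((i : ℕ) + 1) * j ((i : ℕ) + 1) :=
        Nat.le_mul_of_pos_left _ (Nat.succ_pos _)
      omega
    · rw [← aux_sum m (fun k => k * j k)]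
      exact hwt
  · intro j hj
    rw [Finset.mem_filter, Fintype.mem_piFinset] at hj
    obtain ⟨hr, hwt⟩ := hj
    simp only [Finset.mem_sigma, Finset.mem_filter, Finset.mem_piAntidiag, Finset.mem_range]
    have key : ∀ f : ℕ → ℕ,
        (∑ k ∈ Finset.Icc 1 m, f k * (if h : k - 1 < m ∧ 1 ≤ k then j ⟨k - 1, h.1⟩ else 0))
        = ∑ i : Fin m, f ((i : ℕ) + 1) * j i := by
      intro f
      rw [aux_sum]
      refine Finset.sum_congr rfl fun i _ => ?_
      have h : (i : ℕ) + 1 - 1 < m ∧ 1 ≤ (i : ℕ) + 1 := ⟨by simp [i.isLt], by omega⟩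
      rw [dif_pos h]
      congr 1
    refine ⟨?_, ⟨?_, ?_⟩, ?_⟩
    · have h1 : ∑ i : Fin m, j i ≤ ∑ i : Fin m, ((i : ℕ) + 1) * j i :=
        Finset.sum_le_sum fun i _ => Nat.le_mul_of_pos_left _ (Nat.succ_pos _)
      omega
    · simpa using key (fun _ => 1)
    · intro k hk
      by_cases h : k - 1 < m ∧ 1 ≤ k
      · rw [Finset.mem_Icc]; omega
      · simp [dif_neg h] at hk
    · exact (key (fun k => k)).trans hwt
  · rintro ⟨n, j⟩ hp
    simp only [Finset.mem_sigma, Finset.mem_filter, Finset.mem_piAntidiag,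
      Finset.mem_range] at hp
    obtain ⟨hn, ⟨hsum, hsupp⟩, hwt⟩ := hp
    refine Sigma.ext ?_ (heq_of_eq ?_)
    · simp only
      rw [← aux_sum, hsum]
    · simp only
      funext k
      by_cases h : k - 1 < m ∧ 1 ≤ k
      · rw [dif_pos h]
        congr 1
        omega
      · rw [dif_neg h]
        by_contra hne
        have hmem := hsupp k (Ne.symm hne)
        rw [Finset.mem_Icc] at hmem
        omega
  · intro j hj
    funext i
    have h : (i : ℕ) + 1 - 1 < m ∧ 1 ≤ (i : ℕ) + 1 := ⟨by simp [i.isLt], by omega⟩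
    simp only [dif_pos h]
    congr 1
  · rintro ⟨n, j⟩ hp
    simp only [Finset.mem_sigma, Finset.mem_filter, Finset.mem_piAntidiag,
      Finset.mem_range] at hp
    obtain ⟨hn, ⟨hsum, hsupp⟩, hwt⟩ := hp
    have h1 : n = ∑ i : Fin m, j ((i : ℕ) + 1) := by rw [← aux_sum, hsum]
    have h2' : Nat.multinomial (Finset.Icc 1 m) j
        = Nat.multinomial Finset.univ (fun i : Fin m => j ((i : ℕ) + 1)) := by
      unfold Nat.multinomial
      rw [aux_sum, aux_prod]
    have h3 : ∏ k ∈ Finset.Icc 1 m, c k ^ j k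
        = ∏ i : Fin m, c ((i : ℕ) + 1) ^ j ((i : ℕ) + 1) := aux_prod m _
    simp only
    rw [← h1, h2', h3]
end
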